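/- Let P be a centrally orthocomplete OML of projections in a synaptic algebra, with central cover γ, and let Q ⊆ P be a type-determining (TD) set. For 0 ≠ p ∈ P, the following are equivalent: (i) there exists 0 ≠ q ∈ Q with q ≤ p and γq = γp; (ii) for every central projection d, if pd ≠ 0 then Q contains a nonzero projection below pd. -/

import Mathlib

universe u

/-- A (partial axiomatization of a) synaptic algebra: a partially ordered real
vector subspace `A` of an associative unital algebra `R`, closed under squaring
and quadratic maps, in which the projections form an orthomodular lattice with
`p⊥ = 1 - p` and, for projections, `p ≤ q ↔ p * q = p ↔ q * p = p`. -/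
structure Synaptic (R : Type u) [Ring R] [PartialOrder R] where
  A : Set R
  one_mem : (1 : R) ∈ A
  add_mem : ∀ {a b : R}, a ∈ A → b ∈ A → a + b ∈ A
  neg_mem : ∀ {a : R}, a ∈ A → -a ∈ A
  sq_mem : ∀ {a : R}, a ∈ A → a * a ∈ A
  quad_mem : ∀ {a b : R}, a ∈ A → b ∈ A → a * b * a ∈ A
  add_le_add_right : ∀ {a b : R}, a ≤ b → ∀ c : R, a + c ≤ b + c
  sq_nonneg' : ∀ {a : R}, a ∈ A → 0 ≤ a * a
  quad_nonneg : ∀ {a b : R}, a ∈ A → b ∈ A → 0 ≤ b → 0 ≤ a * b * a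
  zero_lt_one' : (0 : R) < 1
  /-- for projections, the order is characterized multiplicatively -/
  proj_le_iff : ∀ {p q : R}, p ∈ A → p * p = p → q ∈ A → q * q = q →
    (p ≤ q ↔ p * q = p ∧ q * p = p)

namespace Synaptic

variable {R : Type u} [Ring R] [PartialOrder R] (S : Synaptic R)

/-- `p` is a projection of `A`. -/
def IsProj (p : R) : Prop := p ∈ S.A ∧ p * p = p

/-- `s` is a symmetry of `A`. -/
def IsSym (s : R) : Prop := s ∈ S.A ∧ s * s = 1

/-- `c` belongs to the center `C(A)` of `A`. -/
def Central (c : R) : Prop := c ∈ S.A ∧ ∀ a ∈ S.A, c * a = a * c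

/-- `c` is a central projection. -/
def IsCentralProj (c : R) : Prop := S.IsProj c ∧ S.Central c

/-- Equivalence of projections: `p ∼ q` iff there is a finite chain of
projections from `p` to `q` in which consecutive members are exchanged by a
symmetry of `A`. -/
def Equiv (p q : R) : Prop :=
  ∃ n : ℕ, ∃ e : ℕ → R, e 0 = p ∧ e n = q ∧ (∀ i ≤ n, S.IsProj (e i)) ∧
    ∀ i < n, ∃ s : R, S.IsSym s ∧ s * e i * s = e (i + 1)

/-- `p ⪯ q`: `p` is equivalent to a subprojection of `q`. -/
def SubEquiv (p q : R) : Prop := ∃ q₁ : R, S.IsProj q₁ ∧ q₁ ≤ q ∧ S.Equiv p q₁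

/-- `p` is the supremum, in the projection lattice `P`, of the set `F` of
projections. -/
def IsSupProj (F : Set R) (p : R) : Prop :=
  S.IsProj p ∧ (∀ q ∈ F, q ≤ p) ∧ ∀ r : R, S.IsProj r → (∀ q ∈ F, q ≤ r) → p ≤ r

/-- `p` is the infimum, in the projection lattice `P`, of the set `F` of
projections. -/
def IsInfProj (F : Set R) (p : R) : Prop :=
  S.IsProj p ∧ (∀ q ∈ F, p ≤ q) ∧ ∀ r : R, S.IsProj r → (∀ q ∈ F, r ≤ q) → r ≤ p

/-- `F` is a (pairwise) orthogonal set of projections. -/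
def OrthSet (F : Set R) : Prop :=
  (∀ p ∈ F, S.IsProj p) ∧ ∀ p ∈ F, ∀ q ∈ F, p ≠ q → p * q = 0

/-- `F` is a centrally orthogonal set of projections: its members are dominated
by a pairwise orthogonal family of central projections. -/
def CentOrthSet (F : Set R) : Prop :=
  (∀ p ∈ F, S.IsProj p) ∧ ∃ c : R → R,
    (∀ p ∈ F, S.IsCentralProj (c p) ∧ p ≤ c p) ∧
    ∀ p ∈ F, ∀ q ∈ F, p ≠ q → c p * c q = 0

/-- The projection lattice `P` is centrally orthocomplete. -/
def CentOrthocomplete : Prop :=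
  ∀ F : Set R, S.CentOrthSet F → ∃ p : R, S.IsSupProj F p

/-- The projection lattice `P` is complete. -/
def CompleteP : Prop :=
  ∀ F : Set R, (∀ p ∈ F, S.IsProj p) → ∃ p : R, S.IsSupProj F p

/-- `c` is the central cover `γ a` of `a`: the smallest central projection `c`
with `a * c = a`. -/
def IsCentralCover (a c : R) : Prop :=
  S.IsCentralProj c ∧ a * c = a ∧
    ∀ d : R, S.IsCentralProj d → a * d = a → c ≤ d

/-- `Q` is a type-determining (TD) set of projections: closed under suprema of
centrally orthogonal families and under meets (= products) with central
projections. -/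
def TD (Q : Set R) : Prop :=
  (∀ q ∈ Q, S.IsProj q) ∧
  (∀ F : Set R, F ⊆ Q → S.CentOrthSet F → ∀ p : R, S.IsSupProj F p → p ∈ Q) ∧
  (∀ q ∈ Q, ∀ c : R, S.IsCentralProj c → q * c ∈ Q)

/-- `Q` is projective: closed under equivalence of projections. -/
def Projective (Q : Set R) : Prop :=
  ∀ p q : R, q ∈ Q → S.Equiv p q → p ∈ Q

/-- `Q` is downward closed (`Q↓ ⊆ Q`). -/
def DownwardClosed (Q : Set R) : Prop :=
  ∀ q ∈ Q, ∀ p : R, S.IsProj p → p ≤ q → p ∈ Q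

/-- The projection `p` is modular: the interval OML `P[0,p]` satisfies the
modular law (stated relationally via suprema and infima in `P`, which agree
with those computed in `P[0,p]`). -/
def ModularProj (p : R) : Prop :=
  S.IsProj p ∧ ∀ a b c : R, S.IsProj a → S.IsProj b → S.IsProj c →
    a ≤ p → b ≤ p → c ≤ p → a ≤ c →
    ∀ i s j m : R, S.IsInfProj {b, c} i → S.IsSupProj {a, i} s →
      S.IsSupProj {a, b} j → S.IsInfProj {j, c} m → s = m

/-- `p` and `q` are perspective in the interval `P[0,r]`: they have a common
complement `x` there. -/
def PerspectiveIn (r p q : R) : Prop :=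
  ∃ x : R, S.IsProj x ∧ x ≤ r ∧ S.IsSupProj {p, x} r ∧ S.IsSupProj {q, x} r ∧
    S.IsInfProj {p, x} 0 ∧ S.IsInfProj {q, x} 0

end Synaptic

/-! If `γ q = γ p`, then `q d = 0` means `γ p = γ q ≤ 1 - d`, i.e. `p d = 0`; so `q d ∈ Q` is a
nonzero projection below `p d`. Conversely, by Zorn take a maximal family of subprojections of `p`
in `Q` whose central covers are pairwise orthogonal. Its central covers witness that it is
centrally orthogonal, so its supremum `q` exists, lies in `Q` and is below `p`; maximality and
(ii) for `d = 1 - γ q` give `γ p ≤ γ q`. -/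

theorem exists_maximal_pairwise_subset {α : Type*} (t : Set α) (r : α → α → Prop) :
    ∃ F, Maximal (fun F => F ⊆ t ∧ F.Pairwise r) F :=
  zorn_subset _ fun C hC hchain =>
    ⟨⋃₀ C, ⟨Set.sUnion_subset fun _ hF => (hC hF).1,
      (Set.pairwise_sUnion hchain.directedOn).2 fun _ hF => (hC hF).2⟩,
      fun _ hF => Set.subset_sUnion_of_mem hF⟩

namespace Synaptic

variable {R : Type u} [Ring R] [PartialOrder R] {S : Synaptic R}

lemma zero_mem (S : Synaptic R) : (0 : R) ∈ S.A := by
  simpa using S.add_mem S.one_mem (S.neg_mem S.one_mem)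

lemma isCentralProj_zero (S : Synaptic R) : S.IsCentralProj 0 :=
  ⟨⟨S.zero_mem, mul_zero 0⟩, S.zero_mem, fun a _ => by rw [zero_mul, mul_zero]⟩

namespace IsProj

variable {p q c : R}

lemma le_iff (hp : S.IsProj p) (hq : S.IsProj q) : p ≤ q ↔ p * q = p ∧ q * p = p :=
  S.proj_le_iff hp.1 hp.2 hq.1 hq.2

lemma eq_zero_of_le_zero (hp : S.IsProj p) (h : p ≤ 0) : p = 0 := by
  simpa using ((hp.le_iff S.isCentralProj_zero.1).1 h).1.symm

lemma one_sub (hp : S.IsProj p) : S.IsProj (1 - p) :=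
  ⟨by simpa [sub_eq_add_neg] using S.add_mem S.one_mem (S.neg_mem hp.1), by
    rw [sub_mul, one_mul, mul_sub, mul_one, hp.2, sub_self, sub_zero]⟩

lemma mul_central (hp : S.IsProj p) (hc : S.IsCentralProj c) : S.IsProj (p * c) := by
  have hcp : c * p = p * c := hc.2.2 p hp.1
  refine ⟨?_, ?_⟩
  · have hmem : p * c * p ∈ S.A := S.quad_mem hp.1 hc.1.1
    rwa [mul_assoc, hcp, ← mul_assoc, hp.2] at hmem
  · rw [mul_assoc, ← mul_assoc c, hcp, mul_assoc, hc.1.2, ← mul_assoc, hp.2]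

lemma le_central_iff (hp : S.IsProj p) (hc : S.IsCentralProj c) : p ≤ c ↔ p * c = p := by
  rw [hp.le_iff hc.1, ← hc.2.2 p hp.1, and_self]

lemma mul_central_le (hp : S.IsProj p) (hc : S.IsCentralProj c) : p * c ≤ c :=
  ((hp.mul_central hc).le_central_iff hc).2 (by rw [mul_assoc, hc.1.2])

lemma mul_central_le_self (hp : S.IsProj p) (hc : S.IsCentralProj c) : p * c ≤ p := by
  have hcp : c * p = p * c := hc.2.2 p hp.1
  refine ((hp.mul_central hc).le_iff hp).2 ⟨?_, ?_⟩
  · rw [mul_assoc, hcp, ← mul_assoc, hp.2]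
  · rw [← mul_assoc, hp.2]

lemma mul_central_le_mul_central (hp : S.IsProj p) (hq : S.IsProj q)
    (hc : S.IsCentralProj c) (hqp : q ≤ p) : q * c ≤ p * c := by
  obtain ⟨hqp₁, hpq₂⟩ := (hq.le_iff hp).1 hqp
  have hcp : c * p = p * c := hc.2.2 p hp.1
  have hcq : c * q = q * c := hc.2.2 q hq.1
  refine ((hq.mul_central hc).le_iff (hp.mul_central hc)).2 ⟨?_, ?_⟩
  · rw [mul_assoc, ← mul_assoc c, hcp, mul_assoc, hc.1.2, ← mul_assoc, hqp₁]
  · rw [mul_assoc, ← mul_assoc c, hcq, mul_assoc, hc.1.2, ← mul_assoc, hpq₂]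

end IsProj

lemma IsCentralProj.one_sub {c : R} (hc : S.IsCentralProj c) : S.IsCentralProj (1 - c) :=
  ⟨hc.1.one_sub, hc.1.one_sub.1, fun a ha => by
    rw [sub_mul, mul_sub, one_mul, mul_one, hc.2.2 a ha]⟩

lemma mul_eq_zero_of_le_of_le_one_sub {c d e : R} (hc : S.IsProj c) (hd : S.IsProj d)
    (he : S.IsProj e) (hce : c ≤ e) (hde : d ≤ 1 - e) : c * d = 0 ∧ d * c = 0 := by
  obtain ⟨hce₁, hce₂⟩ := (hc.le_iff he).1 hce
  obtain ⟨hde₁, hde₂⟩ := (hd.le_iff he.one_sub).1 hde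
  have he₁ : e * (1 - e) = 0 := by rw [mul_sub, mul_one, he.2, sub_self]
  have he₂ : (1 - e) * e = 0 := by rw [sub_mul, one_mul, he.2, sub_self]
  constructor
  · rw [← hce₁, ← hde₂, mul_assoc, ← mul_assoc e, he₁, zero_mul, mul_zero]
  · rw [← hde₁, ← hce₂, mul_assoc, ← mul_assoc (1 - e), he₂, zero_mul, mul_zero]

namespace IsCentralCover

variable {a b c d : R}

lemma le_iff_mul_eq (h : S.IsCentralCover a c) (hd : S.IsCentralProj d) :
    c ≤ d ↔ a * d = a := by
  refine ⟨fun hcd => ?_, h.2.2 d hd⟩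
  rw [← h.2.1, mul_assoc, ((h.1.1.le_iff hd.1).1 hcd).1]

lemma le_iff_le (h : S.IsCentralCover a c) (ha : S.IsProj a) (hd : S.IsCentralProj d) :
    c ≤ d ↔ a ≤ d := by
  rw [h.le_iff_mul_eq hd, ha.le_central_iff hd]

lemma le_one_sub_iff (h : S.IsCentralCover a c) (hd : S.IsCentralProj d) :
    c ≤ 1 - d ↔ a * d = 0 := by
  rw [h.le_iff_mul_eq hd.one_sub, mul_sub, mul_one, sub_eq_self]

lemma self_le (h : S.IsCentralCover a c) (ha : S.IsProj a) : a ≤ c :=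
  (h.le_iff_le ha h.1).1 le_rfl

lemma mono (ha : S.IsCentralCover a c) (hb : S.IsCentralCover b d) (haP : S.IsProj a)
    (hbP : S.IsProj b) (hab : a ≤ b) : c ≤ d :=
  (ha.le_iff_le haP hb.1).2 (hab.trans (hb.self_le hbP))

lemma eq_zero_iff (h : S.IsCentralCover a c) : c = 0 ↔ a = 0 := by
  refine ⟨fun hc => by rw [← h.2.1, hc, mul_zero], fun ha => ?_⟩
  exact h.1.1.eq_zero_of_le_zero (h.2.2 0 S.isCentralProj_zero (by rw [ha, mul_zero]))

end IsCentralCover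

lemma centOrthSet_of_pairwise_cover {γ : R → R} {F : Set R} (hF : ∀ x ∈ F, S.IsProj x)
    (hγ : ∀ x ∈ F, S.IsCentralCover x (γ x)) (horth : F.Pairwise fun x y => γ x * γ y = 0) :
    S.CentOrthSet F :=
  ⟨hF, γ, fun x hx => ⟨(hγ x hx).1, (hγ x hx).self_le (hF x hx)⟩, horth⟩

variable {γ : R → R} {Q F : Set R} {p q : R}

/-- Were `p * (1 - γ q) ≠ 0`, a nonzero `q' ∈ Q` below it would have central cover orthogonal
to every `γ x` with `x ∈ F`, contradicting maximality. -/
lemma mul_one_sub_cover_sup_eq_zero (hγ : ∀ r, S.IsProj r → S.IsCentralCover r (γ r))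
    (hQ : ∀ q ∈ Q, S.IsProj q) (hp : S.IsProj p)
    (hdense : ∀ d, S.IsCentralProj d → p * d ≠ 0 → ∃ q ∈ Q, q ≠ 0 ∧ q ≤ p * d)
    (hF : Maximal (fun F => F ⊆ Q ∩ Set.Iic p ∧ F.Pairwise fun x y => γ x * γ y = 0) F)
    (hq : S.IsSupProj F q) : p * (1 - γ q) = 0 := by
  have hγq := hγ q hq.1
  by_contra hne
  obtain ⟨q', hq'Q, hq'0, hq'le⟩ := hdense _ hγq.1.one_sub hne
  have hq' := hQ q' hq'Q
  have hγq' := hγ q' hq'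
  have hγq'le : γ q' ≤ 1 - γ q :=
    (hγq'.le_iff_le hq' hγq.1.one_sub).2 (hq'le.trans (hp.mul_central_le hγq.1.one_sub))
  have horth : ∀ x ∈ F, γ x * γ q' = 0 ∧ γ q' * γ x = 0 := fun x hx =>
    have hx' := hQ x (hF.1.1 hx).1
    mul_eq_zero_of_le_of_le_one_sub (hγ x hx').1.1 hγq'.1.1 hγq.1.1
      ((hγ x hx').mono hγq hx' hq.1 (hq.2.1 x hx)) hγq'le
  have hq'F : q' ∈ F := hF.mem_of_prop_insert
    ⟨Set.insert_subset ⟨hq'Q, hq'le.trans (hp.mul_central_le_self hγq.1.one_sub)⟩ hF.1.1,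
      Set.pairwise_insert.2 ⟨hF.1.2, fun x hx _ => (horth x hx).symm⟩⟩
  exact hq'0 (hγq'.eq_zero_iff.1 (hγq'.1.1.2.symm.trans (horth q' hq'F).1))

lemma exists_le_cover_eq (hco : S.CentOrthocomplete)
    (hγ : ∀ r, S.IsProj r → S.IsCentralCover r (γ r)) (hQ : S.TD Q) (hp : S.IsProj p)
    (hdense : ∀ d, S.IsCentralProj d → p * d ≠ 0 → ∃ q ∈ Q, q ≠ 0 ∧ q ≤ p * d) :
    ∃ q ∈ Q, q ≤ p ∧ γ q = γ p := by
  obtain ⟨F, hF⟩ := exists_maximal_pairwise_subset (Q ∩ Set.Iic p) fun x y => γ x * γ y = 0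
  have hFproj : ∀ x ∈ F, S.IsProj x := fun x hx => hQ.1 x (hF.1.1 hx).1
  have hcent : S.CentOrthSet F :=
    centOrthSet_of_pairwise_cover hFproj (fun x hx => hγ x (hFproj x hx)) hF.1.2
  obtain ⟨q, hq⟩ := hco F hcent
  have hqp : q ≤ p := hq.2.2 p hp fun x hx => (hF.1.1 hx).2
  have hγq := hγ q hq.1
  have hγpq : γ p ≤ γ q := by
    simpa only [sub_sub_cancel] using ((hγ p hp).le_one_sub_iff hγq.1.one_sub).2
      (mul_one_sub_cover_sup_eq_zero hγ hQ.1 hp hdense hF hq)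
  exact ⟨q, hQ.2.1 F (fun x hx => (hF.1.1 hx).1) hcent q hq, hqp,
    le_antisymm (hγq.mono (hγ p hp) hq.1 hp hqp) hγpq⟩

end Synaptic

/-- Let `Q` be a TD set and `0 ≠ p` a projection. Then there exists
`0 ≠ q ∈ Q` with `q ≤ p` and `γq = γp` iff for every central projection `d`
with `pd ≠ 0`, `Q` contains a nonzero projection below `pd`. -/
theorem td_gamma_eq_iff {R : Type u} [Ring R] [PartialOrder R]
    (S : Synaptic R) (hco : S.CentOrthocomplete)
    (γ : R → R) (hγ : ∀ r : R, S.IsProj r → S.IsCentralCover r (γ r))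
    (Q : Set R) (hQ : S.TD Q) (p : R) (hp : S.IsProj p) (hp0 : p ≠ 0) :
    (∃ q ∈ Q, q ≠ 0 ∧ q ≤ p ∧ γ q = γ p) ↔
      (∀ d : R, S.IsCentralProj d → p * d ≠ 0 →
        ∃ q ∈ Q, q ≠ 0 ∧ q ≤ p * d) := by
  constructor
  · rintro ⟨q, hqQ, -, hqp, hγqp⟩ d hd hpd
    have hq := hQ.1 q hqQ
    refine ⟨q * d, hQ.2.2 q hqQ d hd, fun hqd => hpd ?_, hp.mul_central_le_mul_central hq hd hqp⟩
    rw [← (hγ p hp).le_one_sub_iff hd, ← hγqp]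
    exact ((hγ q hq).le_one_sub_iff hd).2 hqd
  · intro hdense
    obtain ⟨q, hqQ, hqp, hγqp⟩ := S.exists_le_cover_eq hco hγ hQ hp hdense
    refine ⟨q, hqQ, fun hq0 => hp0 ?_, hqp, hγqp⟩
    rw [← (hγ p hp).eq_zero_iff, ← hγqp]
    exact (hγ q (hQ.1 q hqQ)).eq_zero_iff.2 hq0
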